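/- For any s ∈ {0,2,3,4}, the directed graph C⃗_(4:n) (n ≥ 5) decomposes into s C⃗_{2n}-factors and 4−s C⃗_n-factors. -/
import Mathlib


/-- Arc relation of the directed complete cyclic multipartite graph `C⃗_(x:n)`. -/
def cvecArcs (x n : ℕ) : (ZMod x × ZMod n) → (ZMod x × ZMod n) → Prop :=
  fun a b => b.2 = a.2 + 1

/-- `A` is a spanning union of `c` vertex-disjoint directed cycles, each of length `n`. -/
def IsCycleFactor {V : Type} (A : V → V → Prop) (c n : ℕ) : Prop :=
  ∃ F : Fin c → ZMod n → V,
    (∀ j, Function.Injective (F j)) ∧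
    (∀ v : V, ∃! p : Fin c × ZMod n, F p.1 p.2 = v) ∧
    (∀ a b, A a b ↔ ∃ j t, F j t = a ∧ F j (t + 1) = b)

namespace S12

def xo (x y : ZMod 4) : ZMod 4 := ((x.val ^^^ y.val : ℕ) : ZMod 4)
lemma xo_assoc : ∀ x y z, xo (xo x y) z = xo x (xo y z) := by decide
lemma xo_swap : ∀ a b c, xo (xo a b) c = xo (xo a c) b := by decide
lemma xo_self : ∀ a, xo a a = 0 := by decide
lemma xo_zero : ∀ x, xo x 0 = x := by decide
lemma zero_xo : ∀ x, xo 0 x = x := by decide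
lemma xo_cancel_right : ∀ x y, xo (xo x y) y = x := by decide
lemma xo_eq_iff : ∀ a b c : ZMod 4, xo a b = c ↔ a = xo c b := by decide
lemma xo_rearr : ∀ a p c g : ZMod 4, xo a (xo p c) = g ↔ xo a c = xo g p := by decide
lemma xo_left_cancel : ∀ x a b : ZMod 4, xo x a = xo x b → a = b := by decide
lemma xo_ne : ∀ a b : ZMod 4, a = xo a b → b = 0 := by decide

def fz (j : Fin 4) : ZMod 4 := (j.val : ZMod 4)
def zf (x : ZMod 4) : Fin 4 := ⟨x.val, x.val_lt⟩
lemma fz_zf : ∀ x, fz (zf x) = x := by decide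
lemma zf_fz : ∀ j, zf (fz j) = j := by decide

def ps (γ : ℕ → ZMod 4) : ℕ → ZMod 4
  | 0 => 0
  | (k+1) => xo (ps γ k) (γ k)

def Gp (π : ZMod 4) (j : Fin 2) : ZMod 4 := if j = 0 then 0 else if π = 1 then 2 else 1

lemma Gp_bij : ∀ π : ZMod 4, π ≠ 0 → ∀ w : ZMod 4,
    ∃! jb : Fin 2 × Bool, xo (Gp π jb.1) (if jb.2 then π else 0) = w := by
  unfold ExistsUnique; decide

lemma modcase {a b n : ℕ} (hn : 0 < n) (ha : a < 2*n) (hb : b < 2*n)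
    (h : a % n = b % n) : a = b ∨ a = b + n ∨ b = a + n := by
  rcases Nat.lt_or_ge a n with h1 | h1 <;> rcases Nat.lt_or_ge b n with h2 | h2
  · rw [Nat.mod_eq_of_lt h1, Nat.mod_eq_of_lt h2] at h; omega
  · rw [Nat.mod_eq_of_lt h1, Nat.mod_eq_sub_mod h2,
      Nat.mod_eq_of_lt (by omega)] at h; omega
  · rw [Nat.mod_eq_of_lt h2, Nat.mod_eq_sub_mod h1,
      Nat.mod_eq_of_lt (by omega)] at h; omega
  · rw [Nat.mod_eq_sub_mod h1, Nat.mod_eq_of_lt (by omega),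
      Nat.mod_eq_sub_mod h2, Nat.mod_eq_of_lt (by omega)] at h; omega

lemma cf_n (n : ℕ) (hn : 2 ≤ n) (γ : ℕ → ZMod 4) (h : ps γ n = 0) :
    IsCycleFactor (fun a b : ZMod 4 × ZMod n => b.2 = a.2 + 1 ∧ b.1 = xo a.1 (γ a.2.val)) 4 n := by
  haveI : NeZero n := ⟨by omega⟩
  have wrap : ∀ i : ZMod n, ps γ (i + 1).val = xo (ps γ i.val) (γ i.val) := by
    intro i
    have hv : (i + 1).val = (i.val + 1) % n := by
      rw [ZMod.val_add, ZMod.val_one_eq_one_mod]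
      rw [Nat.mod_eq_of_lt (by omega : (1:ℕ) < n)]
    have hlt : i.val < n := i.val_lt
    rcases Nat.lt_or_ge (i.val + 1) n with hc | hc
    · rw [hv, Nat.mod_eq_of_lt hc]; rfl
    · have he : i.val + 1 = n := by omega
      rw [hv, he, Nat.mod_self]
      show (0 : ZMod 4) = _
      rw [show xo (ps γ i.val) (γ i.val) = ps γ (i.val + 1) from rfl, he, h]
  refine ⟨fun j i => (xo (fz j) (ps γ i.val), i), ?_, ?_, ?_⟩
  · intro j a b hab
    exact congrArg Prod.snd hab
  · rintro ⟨g, i⟩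
    refine ⟨(zf (xo g (ps γ i.val)), i), ?_, ?_⟩
    · show (xo (fz (zf _)) _, i) = _
      rw [fz_zf, xo_cancel_right]
    · rintro ⟨j, k⟩ hjk
      have h2 : k = i := congrArg Prod.snd hjk
      subst h2
      have h1 : xo (fz j) (ps γ k.val) = g := congrArg Prod.fst hjk
      rw [xo_eq_iff] at h1
      rw [Prod.mk.injEq]
      refine ⟨?_, rfl⟩
      rw [← zf_fz j, h1]
  · rintro ⟨g, i⟩ ⟨g', i'⟩
    constructor
    · rintro ⟨h2, h1⟩
      refine ⟨zf (xo g (ps γ i.val)), i, ?_, ?_⟩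
      · show (xo (fz (zf _)) _, i) = _
        rw [fz_zf, xo_cancel_right]
      · show (xo (fz (zf _)) (ps γ (i+1).val), i + 1) = _
        rw [fz_zf, wrap, Prod.mk.injEq]
        refine ⟨?_, h2.symm⟩
        rw [← xo_assoc, xo_cancel_right, ← h1]
    · rintro ⟨j, k, ha, hb⟩
      have ha2 : k = i := congrArg Prod.snd ha
      have ha1 : xo (fz j) (ps γ k.val) = g := congrArg Prod.fst ha
      have hb2 : k + 1 = i' := congrArg Prod.snd hb
      have hb1 : xo (fz j) (ps γ (k+1).val) = g' := congrArg Prod.fst hb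
      subst ha2; subst hb2
      refine ⟨rfl, ?_⟩
      show g' = xo g (γ k.val)
      rw [← ha1, ← hb1, wrap, ← xo_assoc]

lemma cf_2n (n : ℕ) (hn : 2 ≤ n) (γ : ℕ → ZMod 4) (π : ZMod 4) (hπ : π ≠ 0)
    (h : ps γ n = π) :
    IsCycleFactor (fun a b : ZMod 4 × ZMod n => b.2 = a.2 + 1 ∧ b.1 = xo a.1 (γ a.2.val))
      2 (2 * n) := by
  haveI hNn : NeZero n := ⟨by omega⟩
  haveI hN2n : NeZero (2 * n) := ⟨by omega⟩
  set e : ℕ → ZMod 4 := fun m => if m < n then ps γ m else xo (ps γ (m - n)) π with he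
  have hval1 : (1 : ZMod (2*n)).val = 1 := by
    rw [ZMod.val_one_eq_one_mod]; exact Nat.mod_eq_of_lt (by omega)
  have hvadd : ∀ k : ZMod (2*n), (k + 1).val = (k.val + 1) % (2*n) := by
    intro k; rw [ZMod.val_add, hval1]
  have castmod : ∀ m : ℕ, ((m % (2*n) : ℕ) : ZMod n) = (m : ZMod n) := by
    intro m
    have h0 : ((2*n : ℕ) : ZMod n) = 0 := by push_cast [ZMod.natCast_self]; ring
    conv_rhs => rw [← Nat.div_add_mod m (2*n)]
    push_cast [h0]; ring
  have sndwrap : ∀ k : ZMod (2*n), (((k+1).val : ℕ) : ZMod n) = ((k.val : ℕ) : ZMod n) + 1 := by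
    intro k; rw [hvadd, castmod]; push_cast; ring
  have wrap2 : ∀ k : ZMod (2*n), e ((k+1).val) = xo (e k.val) (γ (k.val % n)) := by
    intro k
    have hm : k.val < 2*n := k.val_lt
    rw [hvadd]
    rcases Nat.lt_or_ge (k.val + 1) (2*n) with hc | hc
    · rw [Nat.mod_eq_of_lt hc]
      rcases Nat.lt_or_ge (k.val + 1) n with hd | hd
      · have hkn : k.val < n := by omega
        rw [he]; simp only [if_pos hd, if_pos hkn, Nat.mod_eq_of_lt hkn]
        rfl
      · rcases Nat.lt_or_ge k.val n with hkn | hkn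
        · -- k.val + 1 = n exactly
          have hee : k.val + 1 = n := by omega
          rw [he]; simp only [if_neg (by omega : ¬ (k.val + 1 < n)), if_pos hkn,
            Nat.mod_eq_of_lt hkn]
          have : k.val + 1 - n = 0 := by omega
          rw [this]
          show xo (ps γ 0) π = _
          have hps : xo (ps γ k.val) (γ k.val) = π := by
            rw [show xo (ps γ k.val) (γ k.val) = ps γ (k.val + 1) from rfl, hee, h]
          rw [hps, show ps γ 0 = (0 : ZMod 4) from rfl, zero_xo]
        · -- n ≤ k.val, k.val + 1 < 2n
          rw [he]; simp only [if_neg (by omega : ¬ (k.val + 1 < n)),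
            if_neg (by omega : ¬ (k.val < n))]
          have hmod : k.val % n = k.val - n := by
            rw [Nat.mod_eq_sub_mod hkn]; exact Nat.mod_eq_of_lt (by omega)
          rw [hmod, show k.val + 1 - n = (k.val - n) + 1 by omega]
          show xo (xo (ps γ (k.val - n)) (γ (k.val - n))) π = _
          rw [xo_swap]
    · -- k.val + 1 = 2n
      have hee : k.val + 1 = 2*n := by omega
      rw [hee, Nat.mod_self]
      have hkn : n ≤ k.val := by omega
      have hmod : k.val % n = k.val - n := by
        rw [Nat.mod_eq_sub_mod hkn]; exact Nat.mod_eq_of_lt (by omega)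
      rw [he]; simp only [if_pos (by omega : 0 < n), if_neg (by omega : ¬ (k.val < n)), hmod]
      show ps γ 0 = xo (xo (ps γ (k.val - n)) π) (γ (k.val - n))
      rw [xo_swap]
      have : xo (ps γ (k.val - n)) (γ (k.val - n)) = ps γ (k.val - n + 1) := rfl
      rw [this, show k.val - n + 1 = n by omega, h]
      show (0 : ZMod 4) = xo π π
      rw [xo_self]
  set F : Fin 2 → ZMod (2*n) → ZMod 4 × ZMod n :=
    fun j k => (xo (Gp π j) (e k.val), ((k.val : ℕ) : ZMod n)) with hF
  -- the e-values at the two candidate positions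
  have epos : ∀ (i : ZMod n) (b : Bool),
      e (i.val + if b then n else 0) = xo (ps γ i.val) (if b then π else 0) := by
    intro i b
    have hiv : i.val < n := i.val_lt
    cases b
    · show e (i.val + 0) = xo (ps γ i.val) 0
      rw [Nat.add_zero, xo_zero, he]
      exact if_pos hiv
    · show e (i.val + n) = xo (ps γ i.val) π
      rw [he]
      simp only [if_neg (by omega : ¬ (i.val + n < n)), Nat.add_sub_cancel]
  -- val of the candidate positions
  have kval : ∀ (i : ZMod n) (b : Bool),
      (((i.val + if b then n else 0 : ℕ) : ZMod (2*n))).val = i.val + if b then n else 0 := by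
    intro i b
    have hiv : i.val < n := i.val_lt
    rw [ZMod.val_natCast]
    apply Nat.mod_eq_of_lt
    cases b <;> simp <;> omega
  -- uniqueness / coverage
  have huniq : ∀ v : ZMod 4 × ZMod n, ∃! p : Fin 2 × ZMod (2*n), F p.1 p.2 = v := by
    rintro ⟨g, i⟩
    obtain ⟨⟨j, b⟩, hjb, hjbu⟩ := Gp_bij π hπ (xo g (ps γ i.val))
    simp only at hjb
    refine ⟨(j, ((i.val + if b then n else 0 : ℕ) : ZMod (2*n))), ?_, ?_⟩
    · show F j _ = (g, i)
      rw [hF]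
      simp only
      rw [kval, epos, Prod.mk.injEq]
      constructor
      · rw [xo_rearr]
        exact hjb
      · cases b
        · show ((i.val + 0 : ℕ) : ZMod n) = i
          rw [Nat.add_zero]
          exact ZMod.natCast_rightInverse i
        · show ((i.val + n : ℕ) : ZMod n) = i
          push_cast [ZMod.natCast_self]
          rw [add_zero]
          exact ZMod.natCast_rightInverse i
    · rintro ⟨j', k'⟩ hjk
      have hsnd : ((k'.val : ℕ) : ZMod n) = i := congrArg Prod.snd hjk
      have hmod : k'.val % n = i.val := by
        have := congrArg ZMod.val hsnd
        rwa [ZMod.val_natCast] at this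
      have hb' : k'.val = i.val + 0 ∨ k'.val = i.val + n := by
        have h1 : k'.val < 2*n := k'.val_lt
        have h2 : i.val < n := i.val_lt
        rcases modcase (by omega) h1 (by omega : i.val < 2*n)
          (by rw [hmod]; exact (Nat.mod_eq_of_lt h2).symm) with hc | hc | hc
        · left; omega
        · right; omega
        · exfalso; omega
      have hfst : xo (Gp π j') (e k'.val) = g := congrArg Prod.fst hjk
      rcases hb' with hc | hc
      · have he' : e k'.val = xo (ps γ i.val) ((if false then π else 0 : ZMod 4)) := by
          rw [hc]; exact epos i false
        rw [he', xo_rearr] at hfst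
        have := hjbu (j', false) hfst
        rw [Prod.mk.injEq] at this
        obtain ⟨hj', hb2⟩ := this
        rw [Prod.mk.injEq]
        refine ⟨hj', ?_⟩
        apply ZMod.val_injective
        rw [kval, ← hb2, hc]
        simp
      · have he' : e k'.val = xo (ps γ i.val) ((if true then π else 0 : ZMod 4)) := by
          rw [hc]; exact epos i true
        rw [he', xo_rearr] at hfst
        have := hjbu (j', true) hfst
        rw [Prod.mk.injEq] at this
        obtain ⟨hj', hb2⟩ := this
        rw [Prod.mk.injEq]
        refine ⟨hj', ?_⟩
        apply ZMod.val_injective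
        rw [kval, ← hb2, hc]
        simp
  refine ⟨F, ?_, huniq, ?_⟩
  · -- injectivity of each F j
    intro j k k' hkk
    have hsnd : ((k.val : ℕ) : ZMod n) = ((k'.val : ℕ) : ZMod n) := congrArg Prod.snd hkk
    have hmod : k.val % n = k'.val % n := by
      have := congrArg ZMod.val hsnd
      rwa [ZMod.val_natCast, ZMod.val_natCast] at this
    have hfst : e k.val = e k'.val := by
      have := congrArg Prod.fst hkk
      exact xo_left_cancel _ _ _ this
    have h1 : k.val < 2*n := k.val_lt
    have h2 : k'.val < 2*n := k'.val_lt
    have key : ∀ m : ℕ, m < n → e m = ps γ m := by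
      intro m hm; rw [he]; exact if_pos hm
    have key2 : ∀ m : ℕ, m < n → e (m + n) = xo (ps γ m) π := by
      intro m hm; rw [he]
      simp only [if_neg (by omega : ¬ (m + n < n)), Nat.add_sub_cancel]
    rcases modcase (by omega) h1 h2 hmod with hc | hc | hc
    · exact ZMod.val_injective _ hc
    · exfalso
      have hkn : k'.val < n := by omega
      rw [hc, key2 _ hkn, key _ hkn] at hfst
      exact hπ (xo_ne _ _ hfst.symm)
    · exfalso
      have hkn : k.val < n := by omega
      rw [hc, key2 _ hkn, key _ hkn] at hfst
      exact hπ (xo_ne _ _ hfst)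
  · -- arc characterization
    rintro ⟨g, i⟩ ⟨g', i'⟩
    constructor
    · rintro ⟨h2, h1⟩
      obtain ⟨⟨j, k⟩, hjk, -⟩ := huniq (g, i)
      refine ⟨j, k, hjk, ?_⟩
      have hsnd : ((k.val : ℕ) : ZMod n) = i := congrArg Prod.snd hjk
      have hfst : xo (Gp π j) (e k.val) = g := congrArg Prod.fst hjk
      have hmod : k.val % n = i.val := by
        have := congrArg ZMod.val hsnd
        rwa [ZMod.val_natCast] at this
      show (xo (Gp π j) (e (k+1).val), _) = (g', i')
      rw [wrap2, ← xo_assoc, hfst, hmod, sndwrap, hsnd, Prod.mk.injEq]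
      exact ⟨h1.symm, h2.symm⟩
    · rintro ⟨j, k, ha, hb⟩
      have ha2 : ((k.val : ℕ) : ZMod n) = i := congrArg Prod.snd ha
      have ha1 : xo (Gp π j) (e k.val) = g := congrArg Prod.fst ha
      have hb2 : (((k+1).val : ℕ) : ZMod n) = i' := congrArg Prod.snd hb
      have hb1 : xo (Gp π j) (e (k+1).val) = g' := congrArg Prod.fst hb
      have hmod : k.val % n = i.val := by
        have := congrArg ZMod.val ha2
        rwa [ZMod.val_natCast] at this
      constructor
      · show i' = i + 1
        rw [← hb2, sndwrap, ha2]
      · show g' = xo g (γ i.val)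
        rw [← ha1, ← hb1, wrap2, ← xo_assoc, hmod]

def piv (s : ℕ) (t : ZMod 4) : ZMod 4 :=
  if s = 2 then (if t.val ≤ 1 then 1 else 0)
  else if s = 3 then (if t = 0 then 1 else if t = 1 then 3 else if t = 2 then 2 else 0)
  else if s = 4 then (if t = 0 then 1 else if t = 3 then 1 else 2)
  else 0
def sg (t : ZMod 4) : ZMod 4 := if t = 0 then 0 else if t = 1 then 2 else if t = 2 then 3 else 1
def col (s n : ℕ) (t : ZMod 4) (i : ℕ) : ZMod 4 :=
  if i = 1 then xo t (piv s t)
  else if i = 2 ∧ n % 2 = 1 then sg t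
  else if i = 3 ∧ n % 2 = 1 then xo t (sg t)
  else t

lemma col_zero (s n : ℕ) (t : ZMod 4) : col s n t 0 = t := by simp [col]
lemma col_one (s n : ℕ) (t : ZMod 4) : col s n t 1 = xo t (piv s t) := by simp [col]
lemma col_two (s n : ℕ) (hp : n % 2 = 1) (t : ZMod 4) : col s n t 2 = sg t := by simp [col, hp]
lemma col_two' (s n : ℕ) (hp : n % 2 = 0) (t : ZMod 4) : col s n t 2 = t := by simp [col, hp]
lemma col_three (s n : ℕ) (hp : n % 2 = 1) (t : ZMod 4) : col s n t 3 = xo t (sg t) := by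
  simp [col, hp]
lemma col_three' (s n : ℕ) (hp : n % 2 = 0) (t : ZMod 4) : col s n t 3 = t := by simp [col, hp]
lemma col_other (s n i : ℕ) (h1 : i ≠ 1) (h2 : i ≠ 2) (h3 : i ≠ 3) (t : ZMod 4) :
    col s n t i = t := by simp [col, h1, h2, h3]

lemma comp_even : ∀ t p : ZMod 4, xo (xo (xo (xo 0 t) (xo t p)) t) t = p := by decide
lemma comp_odd : ∀ t p u : ZMod 4, xo (xo (xo (xo 0 t) (xo t p)) u) (xo t u) = xo p t := by decide
lemma ps4_expand (γ : ℕ → ZMod 4) :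
    ps γ 4 = xo (xo (xo (xo 0 (γ 0)) (γ 1)) (γ 2)) (γ 3) := rfl

lemma ps_col (s n : ℕ) (hn : 5 ≤ n) (t : ZMod 4) : ps (col s n t) n = piv s t := by
  have hge : ∀ i, 4 ≤ i → col s n t i = t := fun i hi =>
    col_other s n i (by omega) (by omega) (by omega) t
  have h4 : ps (col s n t) 4 = if n % 2 = 1 then xo (piv s t) t else piv s t := by
    rw [ps4_expand, col_zero, col_one]
    rcases Nat.mod_two_eq_zero_or_one n with hp | hp
    · rw [col_two' s n hp, col_three' s n hp, if_neg (by omega), comp_even]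
    · rw [col_two s n hp, col_three s n hp, if_pos hp, comp_odd]
  have step : ∀ k, ps (col s n t) (4 + k) =
      xo (ps (col s n t) 4) (if k % 2 = 1 then t else 0) := by
    intro k
    induction k with
    | zero => rw [Nat.add_zero, if_neg (by omega), xo_zero]
    | succ k ih =>
      have : 4 + (k + 1) = (4 + k) + 1 := by omega
      rw [this]
      show xo (ps (col s n t) (4 + k)) (col s n t (4 + k)) = _
      rw [ih, hge (4 + k) (by omega)]
      rcases Nat.mod_two_eq_zero_or_one k with hk | hk
      · rw [if_neg (by omega), if_pos (by omega), xo_zero]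
      · rw [if_pos hk, if_neg (by omega), xo_cancel_right, xo_zero]
  have hn4 : 4 + (n - 4) = n := by omega
  have hstep := step (n - 4)
  rw [hn4] at hstep
  rw [hstep, h4]
  rcases Nat.mod_two_eq_zero_or_one n with hp | hp
  · rw [if_neg (by omega), if_neg (by omega), xo_zero]
  · rw [if_pos hp, if_pos (by omega), xo_cancel_right]

lemma exu_other : ∀ g h : ZMod 4, ∃! t : Fin 4, h = xo g (((t.val : ℕ) : ZMod 4)) := by
  unfold ExistsUnique; decide
lemma exu_sg : ∀ g h : ZMod 4, ∃! t : Fin 4, h = xo g (sg ((t.val : ℕ) : ZMod 4)) := by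
  unfold ExistsUnique; decide
lemma exu_tsg : ∀ g h : ZMod 4,
    ∃! t : Fin 4, h = xo g (xo ((t.val : ℕ) : ZMod 4) (sg ((t.val : ℕ) : ZMod 4))) := by
  unfold ExistsUnique; decide

lemma hexu_of (s n : ℕ)
    (h1 : ∀ g h : ZMod 4, ∃! t : Fin 4,
      h = xo g (xo ((t.val : ℕ) : ZMod 4) (piv s ((t.val : ℕ) : ZMod 4)))) :
    ∀ (g h : ZMod 4) (i : ℕ), ∃! t : Fin 4, h = xo g (col s n ((t.val : ℕ) : ZMod 4) i) := by
  intro g h i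
  by_cases hi1 : i = 1
  · subst hi1; simp only [col_one]; exact h1 g h
  by_cases hi2 : i = 2
  · subst hi2
    rcases Nat.mod_two_eq_zero_or_one n with hp | hp
    · simp only [col_two' s n hp]; exact exu_other g h
    · simp only [col_two s n hp]; exact exu_sg g h
  by_cases hi3 : i = 3
  · subst hi3
    rcases Nat.mod_two_eq_zero_or_one n with hp | hp
    · simp only [col_three' s n hp]; exact exu_other g h
    · simp only [col_three s n hp]; exact exu_tsg g h
  · simp only [col_other s n i hi1 hi2 hi3]; exact exu_other g h

lemma main_core (n s : ℕ) (hn : 5 ≤ n)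
    (hexu : ∀ (g h : ZMod 4) (i : ℕ),
      ∃! t : Fin 4, h = xo g (col s n ((t.val : ℕ) : ZMod 4) i))
    (hne : ∀ t : Fin 4, t.val < s → piv s ((t.val : ℕ) : ZMod 4) ≠ 0)
    (heq : ∀ t : Fin 4, s ≤ t.val → piv s ((t.val : ℕ) : ZMod 4) = 0) :
    ∃ F : Fin 4 → ((ZMod 4 × ZMod n) → (ZMod 4 × ZMod n) → Prop),
      (∀ t a b, F t a b → cvecArcs 4 n a b) ∧
      (∀ a b, cvecArcs 4 n a b → ∃! t, F t a b) ∧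
      (∀ t : Fin 4,
        (t.val < s → IsCycleFactor (F t) 2 (2 * n)) ∧
        (s ≤ t.val → IsCycleFactor (F t) 4 n)) := by
  refine ⟨fun t a b => b.2 = a.2 + 1 ∧ b.1 = xo a.1 (col s n ((t.val : ℕ) : ZMod 4) a.2.val),
    ?_, ?_, ?_⟩
  · exact fun t a b hab => hab.1
  · intro a b hab
    obtain ⟨t, ht, htu⟩ := hexu a.1 b.1 a.2.val
    exact ⟨t, ⟨hab, ht⟩, fun y hy => htu y hy.2⟩
  · intro t
    constructor
    · intro hts
      exact cf_2n n (by omega) (fun i => col s n ((t.val : ℕ) : ZMod 4) i) _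
        (hne t hts) (ps_col s n hn _)
    · intro hts
      have h0 := ps_col s n hn ((t.val : ℕ) : ZMod 4)
      rw [heq t hts] at h0
      exact cf_n n (by omega) (fun i => col s n ((t.val : ℕ) : ZMod 4) i) h0

end S12

/-- For any `s ∈ {0,2,3,4}`, the graph `C⃗_(4:n)` (`n ≥ 5`) decomposes into `s`
`C⃗_{2n}`-factors and `4 − s` `C⃗_n`-factors. -/
theorem stmt12 (n s : ℕ) (hn : 5 ≤ n) (hs : s ∈ ({0, 2, 3, 4} : Set ℕ)) :
    ∃ F : Fin 4 → ((ZMod 4 × ZMod n) → (ZMod 4 × ZMod n) → Prop),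
      (∀ t a b, F t a b → cvecArcs 4 n a b) ∧
      (∀ a b, cvecArcs 4 n a b → ∃! t, F t a b) ∧
      (∀ t : Fin 4,
        (t.val < s → IsCycleFactor (F t) 2 (2 * n)) ∧
        (s ≤ t.val → IsCycleFactor (F t) 4 n)) := by
  simp only [Set.mem_insert_iff, Set.mem_singleton_iff] at hs
  rcases hs with rfl | rfl | rfl | rfl
  · exact S12.main_core n 0 hn (S12.hexu_of 0 n (by unfold ExistsUnique; decide))
      (by decide) (by decide)
  · exact S12.main_core n 2 hn (S12.hexu_of 2 n (by unfold ExistsUnique; decide))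
      (by decide) (by decide)
  · exact S12.main_core n 3 hn (S12.hexu_of 3 n (by unfold ExistsUnique; decide))
      (by decide) (by decide)
  · exact S12.main_core n 4 hn (S12.hexu_of 4 n (by unfold ExistsUnique; decide))
      (by decide) (by decide)
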